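/- (Deterministic rejection implication, Eq. (A.4) in the proof of Theorem 5 of the paper.) Fix an integer n ≥ 1, reals q ≥ 0 and ε > 0, fixed vectors X_1, …, X_n ∈ ℝ^K, b ∈ ℝ^K, finite nonempty sets 𝒱_u, 𝒱_l ⊆ ℝ^K, a point v ∈ 𝒱_u, and data y_1, …, y_n ∈ {0,1}. Let W_i = (2y_i − 1)·1{X_i b ≥ 0 and X_i v < 0} for each i, and let T_n(b) be the test statistic computed from (y_1, …, y_n). If √n·(n^{-1} Σ_i W_i) < −q·max{ε, √((n^{-1} Σ_i W_i²)/(1 + q²/n))}, then T_n(b) > q. -/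

import Mathlib

/-- Sample upper moment `m̂_u(b,v)` computed from outcomes `y`. -/
noncomputable def muHatU {n K : ℕ} (X : Fin n → Fin K → ℝ) (b v : Fin K → ℝ)
    (y : Fin n → ℝ) : ℝ :=
  (n : ℝ)⁻¹ * ∑ i, (2 * y i - 1) *
    (if 0 ≤ (∑ j, X i j * b j) ∧ (∑ j, X i j * v j) < 0 then 1 else 0)

/-- Sample lower moment `m̂_l(b,v)` computed from outcomes `y`. -/
noncomputable def muHatL {n K : ℕ} (X : Fin n → Fin K → ℝ) (b v : Fin K → ℝ)
    (y : Fin n → ℝ) : ℝ :=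
  (n : ℝ)⁻¹ * ∑ i, (1 - 2 * y i) *
    (if (∑ j, X i j * b j) ≤ 0 ∧ 0 < (∑ j, X i j * v j) then 1 else 0)

/-- Sample variance `σ̂_u²(b,v)`. -/
noncomputable def sigHatU2 {n K : ℕ} (X : Fin n → Fin K → ℝ) (b v : Fin K → ℝ)
    (y : Fin n → ℝ) : ℝ :=
  (n : ℝ)⁻¹ * (∑ i, (if 0 ≤ (∑ j, X i j * b j) ∧ (∑ j, X i j * v j) < 0
      then (1:ℝ) else 0)) - (muHatU X b v y) ^ 2

/-- Sample variance `σ̂_l²(b,v)`. -/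
noncomputable def sigHatL2 {n K : ℕ} (X : Fin n → Fin K → ℝ) (b v : Fin K → ℝ)
    (y : Fin n → ℝ) : ℝ :=
  (n : ℝ)⁻¹ * (∑ i, (if (∑ j, X i j * b j) ≤ 0 ∧ 0 < (∑ j, X i j * v j)
      then (1:ℝ) else 0)) - (muHatL X b v y) ^ 2

/-- The test statistic `T_n(b)` computed from outcomes `y`. -/
noncomputable def Tstat {n K : ℕ} (X : Fin n → Fin K → ℝ)
    (Vu Vl : Finset (Fin K → ℝ)) (hu : Vu.Nonempty) (hl : Vl.Nonempty)
    (ε : ℝ) (b : Fin K → ℝ) (y : Fin n → ℝ) : ℝ :=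
  max 0 (max
    (Vu.sup' hu fun v =>
      Real.sqrt n * (-(muHatU X b v y)) /
        max (Real.sqrt (sigHatU2 X b v y)) ε)
    (Vl.sup' hl fun v =>
      Real.sqrt n * (-(muHatL X b v y)) /
        max (Real.sqrt (sigHatL2 X b v y)) ε))

/-! Each `W i` lies in `{-1, 0, 1}`, so the mean of the `W i ^ 2` is the indicator frequency `s`
and `σ̂_u² = s - m̂_u²`. Squaring `√n (-m̂_u) > q √(s / (1 + q² / n))` gives
`s - s / (1 + q² / n) ≤ m̂_u²`, i.e. `σ̂_u² ≤ s / (1 + q² / n)`; hence the denominator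
`max σ̂_u ε` of the statistic at `v` is at most `max ε √(s / (1 + q² / n))`, and the
standardized moment at `v`, a lower bound for `T_n(b)`, exceeds `q`. -/

open Finset

lemma sub_sq_le_div_one_add_of_le {n q s m : ℝ} (hn : 0 < n)
    (h : q ^ 2 * (s / (1 + q ^ 2 / n)) ≤ n * m ^ 2) :
    s - m ^ 2 ≤ s / (1 + q ^ 2 / n) := by
  have hgap : s - s / (1 + q ^ 2 / n) = q ^ 2 * (s / (1 + q ^ 2 / n)) / n := by
    field_simp
    ring
  have hle : q ^ 2 * (s / (1 + q ^ 2 / n)) / n ≤ m ^ 2 := by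
    rw [div_le_iff₀ hn]
    linarith
  linarith

lemma lt_standardized_of_lt {n q ε s m : ℝ} (hn : 0 < n) (hq : 0 ≤ q) (hε : 0 < ε)
    (hs : 0 ≤ s) (h : √n * m < -q * max ε √(s / (1 + q ^ 2 / n))) :
    q < √n * (-m) / max √(s - m ^ 2) ε := by
  set D := 1 + q ^ 2 / n
  have hA : q * max ε √(s / D) < √n * (-m) := by linarith
  have hsq : q ^ 2 * (s / D) ≤ n * m ^ 2 := by
    have hlt : q * √(s / D) < √n * (-m) :=
      (mul_le_mul_of_nonneg_left (le_max_right _ _) hq).trans_lt hA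
    have := pow_lt_pow_left₀ hlt (by positivity) two_ne_zero
    rw [mul_pow, mul_pow, Real.sq_sqrt (by positivity), Real.sq_sqrt hn.le, neg_sq] at this
    exact this.le
  have hmax : max √(s - m ^ 2) ε ≤ max ε √(s / D) := by
    rw [max_comm ε]
    exact max_le_max (Real.sqrt_le_sqrt (sub_sq_le_div_one_add_of_le hn hsq)) le_rfl
  rw [lt_div_iff₀ (lt_max_of_lt_right hε)]
  calc q * max √(s - m ^ 2) ε ≤ q * max ε √(s / D) := mul_le_mul_of_nonneg_left hmax hq
    _ < √n * (-m) := hA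

lemma sign_mul_indicator_sq {y : ℝ} (hy : y = 0 ∨ y = 1) (p : Prop) [Decidable p] :
    ((2 * y - 1) * (if p then 1 else 0)) ^ 2 = if p then 1 else 0 := by
  rcases hy with rfl | rfl <;> split_ifs <;> norm_num

lemma standardized_le_Tstat {n K : ℕ} (X : Fin n → Fin K → ℝ)
    (Vu Vl : Finset (Fin K → ℝ)) (hu : Vu.Nonempty) (hl : Vl.Nonempty)
    (ε : ℝ) (b : Fin K → ℝ) (y : Fin n → ℝ) {v : Fin K → ℝ} (hv : v ∈ Vu) :
    √n * (-(muHatU X b v y)) / max √(sigHatU2 X b v y) ε ≤ Tstat X Vu Vl hu hl ε b y :=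
  (le_sup' (fun v => √n * (-(muHatU X b v y)) / max √(sigHatU2 X b v y) ε) hv).trans
    ((le_max_left _ _).trans (le_max_right _ _))

/-- Eq. (A.4) in the proof of Theorem 5: if the standardized sample moment at some
`v ∈ 𝒱_u` is sufficiently negative, then `T_n(b) > q`. -/
theorem rejection_implication
    {n K : ℕ} (hn : 1 ≤ n)
    (q ε : ℝ) (hq : 0 ≤ q) (hε : 0 < ε)
    (X : Fin n → Fin K → ℝ) (b : Fin K → ℝ)
    (Vu Vl : Finset (Fin K → ℝ)) (hu : Vu.Nonempty) (hl : Vl.Nonempty)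
    (v : Fin K → ℝ) (hv : v ∈ Vu)
    (y : Fin n → ℝ) (hy : ∀ i, y i = 0 ∨ y i = 1)
    (W : Fin n → ℝ)
    (hW : ∀ i, W i = (2 * y i - 1) *
      (if 0 ≤ (∑ j, X i j * b j) ∧ (∑ j, X i j * v j) < 0 then 1 else 0))
    (hviol : Real.sqrt n * ((n : ℝ)⁻¹ * ∑ i, W i) <
      -q * max ε (Real.sqrt (((n : ℝ)⁻¹ * ∑ i, (W i) ^ 2) / (1 + q ^ 2 / n)))) :
    q < Tstat X Vu Vl hu hl ε b y := by
  have hn0 : (0 : ℝ) < n := by exact_mod_cast hn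
  have hmean : (n : ℝ)⁻¹ * ∑ i, W i = muHatU X b v y := by simp only [hW, muHatU]
  have hmeanSq : (n : ℝ)⁻¹ * ∑ i, W i ^ 2 = (n : ℝ)⁻¹ * ∑ i,
      (if 0 ≤ (∑ j, X i j * b j) ∧ (∑ j, X i j * v j) < 0 then (1 : ℝ) else 0) := by
    simp only [hW, sign_mul_indicator_sq (hy _)]
  rw [hmean, hmeanSq] at hviol
  have hs : 0 ≤ (n : ℝ)⁻¹ * ∑ i,
      (if 0 ≤ (∑ j, X i j * b j) ∧ (∑ j, X i j * v j) < 0 then (1 : ℝ) else 0) := by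
    positivity
  exact (lt_standardized_of_lt hn0 hq hε hs hviol).trans_le
    (standardized_le_Tstat X Vu Vl hu hl ε b y hv)
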